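/- Every connected graph with n vertices and m edges has a bipartite subgraph with at least m/2 + (n−1)/4 edges. -/

import Mathlib

/-!
Induct on the vertex set with the invariant `4 cut ≥ 2 m + n - 1`. Putting back a vertex whose
degree `d` into the rest is odd, with the better of its two colours, gains at least `(d + 1) / 2`
cut edges; putting back two adjacent vertices `u, v` in opposite colours, the better of the two
choices gains at least `1 + (d_u + d_v) / 2`. Both keep the invariant, so it remains to see that
every connected graph on at least two vertices has a non-separating vertex of odd degree or an
edge whose two ends can be removed together without disconnecting it. Such a vertex or edge is
found inside a smallest piece that a single vertex cuts off.
-/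

open Finset SimpleGraph

lemma Bool.exists_apply_not_le {α : Type*} [LinearOrder α] (f : Bool → α) :
    ∃ b, f (!b) ≤ f b := by
  rcases le_total (f false) (f true) with h | h
  · exact ⟨true, h⟩
  · exact ⟨false, h⟩

namespace Finset

variable {α : Type*}

lemma card_filter_and_ne_add_card_filter_and_not_ne (s : Finset α) (p : α → Prop)
    [DecidablePred p] (c : α → Bool) (b : Bool) :
    #{y ∈ s | p y ∧ b ≠ c y} + #{y ∈ s | p y ∧ (!b) ≠ c y} = #{y ∈ s | p y} := by
  rw [← card_filter_add_card_filter_not (s := {y ∈ s | p y}) (b ≠ c ·), filter_filter,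
    filter_filter]
  congr 2
  ext y
  cases b <;> simp

lemma card_filter_insert_of_notMem [DecidableEq α] {s : Finset α} {a : α} (ha : a ∉ s)
    (p : α → Prop) [DecidablePred p] :
    #{y ∈ insert a s | p y} = #{y ∈ s | p y} + if p a then 1 else 0 := by
  rw [filter_insert]
  split_ifs
  · exact card_insert_of_notMem fun h => ha (mem_of_mem_filter a h)
  · rfl

end Finset

namespace SimpleGraph

variable {V : Type*}

section Connectivity

variable (G : SimpleGraph V)

/-- The induced subgraph on `A`, kept on the vertex type `V` by isolating the vertices outside
`A`. -/
def inducedOn (A : Finset V) : SimpleGraph V where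
  Adj x y := G.Adj x y ∧ x ∈ A ∧ y ∈ A
  symm := ⟨fun _ _ h => ⟨h.1.symm, h.2.2, h.2.1⟩⟩
  loopless := ⟨fun x h => G.loopless.irrefl x h.1⟩

def PreconnectedOn (A : Finset V) : Prop :=
  ∀ x ∈ A, ∀ y ∈ A, (G.inducedOn A).Reachable x y

variable {G}

lemma preconnectedOn_of_forall_reachable {A : Finset V} {w : V}
    (h : ∀ x ∈ A, (G.inducedOn A).Reachable x w) : PreconnectedOn G A :=
  fun x hx y hy => (h x hx).trans (h y hy).symm

lemma PreconnectedOn.exists_adj {A : Finset V} (hA : PreconnectedOn G A) {u : V} (hu : u ∈ A)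
    (hA2 : 2 ≤ #A) : ∃ z ∈ A, G.Adj u z := by
  obtain ⟨y, hy, hyu⟩ := exists_mem_ne (show 1 < #A by omega) u
  obtain ⟨W⟩ := hA u hu y hy
  cases W with
  | nil => exact absurd rfl hyu
  | cons h _ => exact ⟨_, h.2.2, h.1⟩

lemma inducedOn_mono {A B : Finset V} (h : A ⊆ B) : G.inducedOn A ≤ G.inducedOn B :=
  fun _ _ hxy => ⟨hxy.1, h hxy.2.1, h hxy.2.2⟩

variable [DecidableEq V]

lemma reachable_erase_of_notMem_support {A : Finset V} {u x y : V}
    (W : (G.inducedOn A).Walk x y) (hx : x ∈ A) (hu : u ∉ W.support) :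
    (G.inducedOn (A.erase u)).Reachable x y := by
  induction W with
  | nil => rfl
  | cons h p ih =>
    rw [Walk.support_cons, List.mem_cons, not_or] at hu
    have hb : _ ∈ A.erase u := mem_erase.2 ⟨fun e => hu.2 (e ▸ p.start_mem_support), h.2.2⟩
    have hxb : (G.inducedOn (A.erase u)).Adj _ _ := ⟨h.1, mem_erase.2 ⟨Ne.symm hu.1, hx⟩, hb⟩
    exact hxb.reachable.trans (ih h.2.2 hu.2)

lemma reachable_erase_or_exists_adj {A : Finset V} {u x y : V}
    (W : (G.inducedOn A).Walk x y) (hx : x ∈ A.erase u) :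
    (G.inducedOn (A.erase u)).Reachable x y ∨
      ∃ z ∈ A.erase u, G.Adj z u ∧ (G.inducedOn (A.erase u)).Reachable x z := by
  induction W with
  | nil => exact Or.inl .rfl
  | @cons x b _ h _ ih =>
    by_cases hbu : b = u
    · exact Or.inr ⟨x, hx, hbu ▸ h.1, .rfl⟩
    have hxb : (G.inducedOn (A.erase u)).Reachable x b :=
      Adj.reachable ⟨h.1, hx, mem_erase.2 ⟨hbu, h.2.2⟩⟩
    rcases ih (mem_erase.2 ⟨hbu, h.2.2⟩) with hby | ⟨z, hz, hzu, hbz⟩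
    · exact Or.inl (hxb.trans hby)
    · exact Or.inr ⟨z, hz, hzu, hxb.trans hbz⟩

lemma reachable_sdiff_of_closed {A D : Finset V} {w t : V}
    (hD : ∀ u ∈ D, ∀ z ∈ A, G.Adj u z → z ∈ D ∨ z = w)
    (W : (G.inducedOn A).Walk t w) (ht : t ∉ D) : (G.inducedOn (A \ D)).Reachable t w := by
  induction W with
  | nil => rfl
  | @cons t b _ h _ ih =>
    by_cases hb : b ∈ D
    · obtain rfl := (hD b hb t h.2.1 h.1.symm).resolve_left ht
      rfl
    · have htb : (G.inducedOn (A \ D)).Adj t b :=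
        ⟨h.1, mem_sdiff.2 ⟨h.2.1, ht⟩, mem_sdiff.2 ⟨h.2.2, hb⟩⟩
      exact htb.reachable.trans (ih hD hb)

/-- Take a smallest piece `D` that a single vertex `w` cuts off from `A`: if removing some
`x ∈ D` disconnected `A`, a piece cut off by `x` would lie inside `D - x`. -/
lemma PreconnectedOn.exists_closed_nonseparating {A : Finset V} (hA : PreconnectedOn G A)
    (hA2 : 2 ≤ #A) :
    ∃ w ∈ A, ∃ D ⊆ A.erase w, D.Nonempty ∧ (∀ x ∈ D, PreconnectedOn G (A.erase x)) ∧
      ∀ u ∈ D, ∀ z ∈ A, G.Adj u z → z ∈ D ∨ z = w := by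
  classical
  let piece (p : V × V) : Finset V :=
    {t ∈ A.erase p.1 | (G.inducedOn (A.erase p.1)).Reachable p.2 t}
  have hpairs : A.offDiag.Nonempty := by
    obtain ⟨a, ha⟩ := card_pos.1 (by omega : 0 < #A)
    obtain ⟨b, hb, hba⟩ := exists_mem_ne (by omega : 1 < #A) a
    exact ⟨(a, b), mem_offDiag.2 ⟨ha, hb, hba.symm⟩⟩
  obtain ⟨⟨w, y⟩, hwy, hmin⟩ := A.offDiag.exists_min_image (fun p => #(piece p)) hpairs
  obtain ⟨hw, hy, hwy⟩ := mem_offDiag.1 hwy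
  have hclosed : ∀ u ∈ piece (w, y), ∀ z ∈ A, G.Adj u z → z ∈ piece (w, y) ∨ z = w := by
    intro u hu z hz huz
    refine or_iff_not_imp_right.2 fun hzw => ?_
    have hz' : z ∈ A.erase w := mem_erase.2 ⟨hzw, hz⟩
    obtain ⟨hu', hyu⟩ := mem_filter.1 hu
    have huz' : (G.inducedOn (A.erase w)).Adj u z := ⟨huz, hu', hz'⟩
    exact mem_filter.2 ⟨hz', hyu.trans huz'.reachable⟩
  refine ⟨w, hw, piece (w, y), filter_subset _ _,
    ⟨y, mem_filter.2 ⟨mem_erase.2 ⟨Ne.symm hwy, hy⟩, .rfl⟩⟩, fun x hx => ?_, hclosed⟩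
  obtain ⟨hxw, hxA⟩ := mem_erase.1 (filter_subset _ _ hx)
  refine preconnectedOn_of_forall_reachable (w := w) fun s hs => ?_
  by_contra hsw
  have hsub : piece (x, s) ⊆ (piece (w, y)).erase x := by
    intro t ht
    obtain ⟨ht', hst⟩ := mem_filter.1 ht
    refine mem_erase.2 ⟨ne_of_mem_erase ht', by_contra fun htD => ?_⟩
    obtain ⟨W⟩ := hA t (mem_of_mem_erase ht') w hw
    have hsdiff : A \ piece (w, y) ⊆ A.erase x :=
      fun a ha => mem_erase.2 ⟨fun hax => (mem_sdiff.1 ha).2 (hax ▸ hx), (mem_sdiff.1 ha).1⟩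
    exact hsw (hst.trans ((reachable_sdiff_of_closed hclosed W htD).mono (inducedOn_mono hsdiff)))
  have hle := hmin (x, s) (mem_offDiag.2 ⟨hxA, mem_of_mem_erase hs, (ne_of_mem_erase hs).symm⟩)
  exact (card_le_card hsub).trans_lt (card_erase_lt_of_mem hx) |>.not_ge hle

/-- Remove `u` together with its neighbour `v` in `D` farthest from `w` in `A - u`: a neighbour
of `u` that is cut off from `w` by `v` would be farther from `w` than `v`. -/
lemma exists_adj_preconnectedOn_erase_erase {A D : Finset V} {w u v₀ : V} (hw : w ∈ A)
    (hDA : D ⊆ A.erase w) (hDconn : ∀ x ∈ D, PreconnectedOn G (A.erase x))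
    (hD : ∀ u ∈ D, ∀ z ∈ A, G.Adj u z → z ∈ D ∨ z = w) (hu : u ∈ D)
    (hv₀ : v₀ ∈ A) (huv₀ : G.Adj u v₀) (hv₀w : v₀ ≠ w) :
    ∃ v ∈ A, G.Adj u v ∧ PreconnectedOn G ((A.erase u).erase v) := by
  classical
  have hN : ({z ∈ D | G.Adj u z}).Nonempty :=
    ⟨v₀, mem_filter.2 ⟨(hD u hu v₀ hv₀ huv₀).resolve_right hv₀w, huv₀⟩⟩
  obtain ⟨v, hvN, hvmax⟩ := exists_max_image _ (fun z => (G.inducedOn (A.erase u)).dist w z) hN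
  obtain ⟨hvD, huv⟩ := mem_filter.1 hvN
  obtain ⟨huw, huA⟩ := mem_erase.1 (hDA hu)
  obtain ⟨hvw, hvA⟩ := mem_erase.1 (hDA hvD)
  have hwu : w ∈ A.erase u := mem_erase.2 ⟨huw.symm, hw⟩
  have hnbr : ∀ z ∈ (A.erase u).erase v, G.Adj z u →
      (G.inducedOn ((A.erase u).erase v)).Reachable z w := by
    intro z hz hzu
    obtain ⟨hzv, hz⟩ := mem_erase.1 hz
    rcases hD u hu z (mem_of_mem_erase hz) hzu.symm with hzD | rfl
    · obtain ⟨W, hW⟩ := (hDconn u hu w hwu z hz).exists_walk_length_eq_dist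
      by_cases hvW : v ∈ W.support
      · have hfar := hvmax z (mem_filter.2 ⟨hzD, hzu.symm⟩)
        have hclose := (dist_le (W.takeUntil v hvW)).trans_lt
          (Walk.length_takeUntil_lt_length hvW hzv.symm)
        omega
      · exact (reachable_erase_of_notMem_support W hwu hvW).symm
    · rfl
  refine ⟨v, hvA, huv, preconnectedOn_of_forall_reachable (w := w) fun y hy => ?_⟩
  rw [erase_right_comm] at hy hnbr ⊢
  obtain ⟨W⟩ := hDconn v hvD y (mem_of_mem_erase hy) w (mem_erase.2 ⟨hvw.symm, hw⟩)
  rcases reachable_erase_or_exists_adj W hy with h | ⟨z, hz, hzu, hyz⟩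
  · exact h
  · exact hyz.trans (hnbr z hz hzu)

theorem PreconnectedOn.exists_odd_or_adj [DecidableRel G.Adj] {A : Finset V}
    (hA : PreconnectedOn G A) (hA2 : 2 ≤ #A) :
    (∃ u ∈ A, PreconnectedOn G (A.erase u) ∧ Odd #{z ∈ A | G.Adj u z}) ∨
      ∃ u ∈ A, ∃ v ∈ A, G.Adj u v ∧ PreconnectedOn G ((A.erase u).erase v) := by
  obtain ⟨w, hw, D, hDA, ⟨u, hu⟩, hDconn, hD⟩ := hA.exists_closed_nonseparating hA2
  have huA := mem_of_mem_erase (hDA hu)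
  refine (em (Odd #{z ∈ A | G.Adj u z})).imp (fun hodd => ⟨u, huA, hDconn u hu, hodd⟩) ?_
  intro heven
  obtain ⟨z, hz, huz⟩ := hA.exists_adj huA hA2
  have hdeg : 1 < #{z ∈ A | G.Adj u z} := by
    have : 0 < #{z ∈ A | G.Adj u z} := card_pos.2 ⟨z, mem_filter.2 ⟨hz, huz⟩⟩
    rw [Nat.not_odd_iff_even] at heven
    obtain ⟨k, hk⟩ := heven
    omega
  obtain ⟨v₀, hv₀, hv₀w⟩ := exists_mem_ne hdeg w
  obtain ⟨hv₀A, huv₀⟩ := mem_filter.1 hv₀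
  exact ⟨u, huA, exists_adj_preconnectedOn_erase_erase hw hDA hDconn hD hu hv₀A huv₀ hv₀w⟩

end Connectivity

section Cut

variable (G : SimpleGraph V) [DecidableRel G.Adj]

def degSumOn (A : Finset V) : ℕ := ∑ x ∈ A, #{y ∈ A | G.Adj x y}

def cutGraph (c : V → Bool) : SimpleGraph V where
  Adj x y := G.Adj x y ∧ c x ≠ c y
  symm := ⟨fun _ _ h => ⟨h.1.symm, h.2.symm⟩⟩
  loopless := ⟨fun x h => G.loopless.irrefl x h.1⟩

instance (c : V → Bool) : DecidableRel (G.cutGraph c).Adj :=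
  fun x y => inferInstanceAs (Decidable (G.Adj x y ∧ c x ≠ c y))

/-- `degSumOn` counts every edge inside `A` twice, so this says `4 cut ≥ 2 m + n - 1` on `A`. -/
def HasEdwardsCutOn (A : Finset V) : Prop :=
  ∃ c : V → Bool, G.degSumOn A + #A ≤ 2 * (G.cutGraph c).degSumOn A + 1

variable {G}

lemma degSumOn_univ [Fintype V] : G.degSumOn univ = 2 * #G.edgeFinset := by
  rw [← sum_degrees_eq_twice_card_edges]
  exact sum_congr rfl fun x _ => by rw [← card_neighborFinset_eq_degree, neighborFinset_eq_filter]

lemma degSumOn_eq_zero {A : Finset V} (hA : #A ≤ 1) : G.degSumOn A = 0 :=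
  sum_eq_zero fun x hx => card_eq_zero.2 <| filter_eq_empty_iff.2 fun y hy h =>
    G.irrefl (card_le_one.1 hA x hx y hy ▸ h)

lemma degSumOn_congr {G' : SimpleGraph V} [DecidableRel G'.Adj] {A : Finset V}
    (h : ∀ x ∈ A, ∀ y ∈ A, G.Adj x y ↔ G'.Adj x y) : G.degSumOn A = G'.degSumOn A :=
  sum_congr rfl fun x hx => congrArg card <| filter_congr fun y hy => h x hx y hy

variable [DecidableEq V]

lemma degSumOn_insert {B : Finset V} {u : V} (hu : u ∉ B) :
    G.degSumOn (insert u B) = G.degSumOn B + 2 * #{y ∈ B | G.Adj u y} := by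
  rw [degSumOn, sum_insert hu, filter_insert, if_neg (G.irrefl),
    sum_congr rfl fun x _ => card_filter_insert_of_notMem hu (G.Adj x), sum_add_distrib,
    ← card_filter]
  simp only [G.adj_comm _ u, degSumOn]
  ring

lemma degSumOn_cutGraph_update_insert {B : Finset V} {u : V} (hu : u ∉ B) (c : V → Bool)
    (b : Bool) : (G.cutGraph (Function.update c u b)).degSumOn (insert u B) =
      (G.cutGraph c).degSumOn B + 2 * #{y ∈ B | G.Adj u y ∧ b ≠ c y} := by
  have hne : ∀ y ∈ B, y ≠ u := fun y hy h => hu (h ▸ hy)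
  rw [degSumOn_insert hu, degSumOn_congr (G' := G.cutGraph c) fun x hx y hy => ?_]
  · congr 3
    exact filter_congr fun y hy => by simp [cutGraph, hne y hy]
  · simp [cutGraph, hne x hx, hne y hy]

lemma HasEdwardsCutOn.insert_of_odd {B : Finset V} {u : V} (hB : G.HasEdwardsCutOn B)
    (hu : u ∉ B) (hodd : Odd #{y ∈ B | G.Adj u y}) : G.HasEdwardsCutOn (insert u B) := by
  obtain ⟨c, hc⟩ := hB
  obtain ⟨b, hb⟩ := Bool.exists_apply_not_le fun b => #{y ∈ B | G.Adj u y ∧ b ≠ c y}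
  refine ⟨Function.update c u b, ?_⟩
  have hsplit := card_filter_and_ne_add_card_filter_and_not_ne B (G.Adj u) c b
  obtain ⟨k, hk⟩ := hodd
  rw [degSumOn_insert hu, degSumOn_cutGraph_update_insert hu, card_insert_of_notMem hu]
  omega

lemma HasEdwardsCutOn.insert_insert_of_adj {B : Finset V} {u v : V} (hB : G.HasEdwardsCutOn B)
    (hv : v ∉ B) (hu : u ∉ insert v B) (huv : G.Adj u v) :
    G.HasEdwardsCutOn (insert u (insert v B)) := by
  obtain ⟨c, hc⟩ := hB
  obtain ⟨b, hb⟩ := Bool.exists_apply_not_le fun b =>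
    #{y ∈ B | G.Adj u y ∧ b ≠ c y} + #{y ∈ B | G.Adj v y ∧ (!b) ≠ c y}
  refine ⟨Function.update (Function.update c v (!b)) u b, ?_⟩
  have hne : ∀ y ∈ B, y ≠ v := fun y hy h => hv (h ▸ hy)
  have hcut_u : #{y ∈ insert v B | G.Adj u y ∧ b ≠ Function.update c v (!b) y} =
      #{y ∈ B | G.Adj u y ∧ b ≠ c y} + 1 := by
    rw [card_filter_insert_of_notMem hv, if_pos (by simpa using huv)]
    congr 2
    exact filter_congr fun y hy => by rw [Function.update_of_ne (hne y hy)]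
  have hsplit_u := card_filter_and_ne_add_card_filter_and_not_ne B (G.Adj u) c b
  have hsplit_v := card_filter_and_ne_add_card_filter_and_not_ne B (G.Adj v) c b
  rw [degSumOn_insert hu, degSumOn_insert hv, card_filter_insert_of_notMem hv, if_pos huv,
    degSumOn_cutGraph_update_insert hu, degSumOn_cutGraph_update_insert hv, hcut_u,
    card_insert_of_notMem hu, card_insert_of_notMem hv]
  rw [Bool.not_not] at hb
  omega

theorem PreconnectedOn.hasEdwardsCutOn {A : Finset V} (hA : G.PreconnectedOn A) :
    G.HasEdwardsCutOn A := by
  induction A using Finset.strongInduction with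
  | H A ih =>
    rcases le_or_gt #A 1 with hA1 | hA2
    · exact ⟨fun _ => true, by rw [degSumOn_eq_zero hA1]; omega⟩
    rcases hA.exists_odd_or_adj hA2 with ⟨u, hu, hAu, hodd⟩ | ⟨u, hu, v, hv, huv, hAuv⟩
    · rw [← insert_erase hu]
      refine HasEdwardsCutOn.insert_of_odd (ih _ (erase_ssubset hu) hAu) (notMem_erase u A) ?_
      rwa [filter_erase, erase_eq_of_notMem fun h => G.irrefl (mem_filter.1 h).2]
    · have hvu : v ∈ A.erase u := mem_erase.2 ⟨huv.ne', hv⟩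
      rw [← insert_erase hu, ← insert_erase hvu]
      refine HasEdwardsCutOn.insert_insert_of_adj
        (ih _ ((erase_ssubset hvu).trans (erase_ssubset hu)) hAuv) (notMem_erase v _) ?_ huv
      simp [huv.ne]

end Cut

end SimpleGraph

/-- Edwards–Erdős bound: every connected graph with `n` vertices and `m` edges
has a bipartite subgraph with at least `m/2 + (n−1)/4` edges. -/
theorem edwards_erdos {V : Type*} [Fintype V] (G : SimpleGraph V)
    (hconn : G.Connected) :
    ∃ H : SimpleGraph V, H ≤ G ∧ H.Colorable 2 ∧
      (G.edgeSet.ncard : ℝ) / 2 + ((Fintype.card V : ℝ) - 1) / 4 ≤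
        (H.edgeSet.ncard : ℝ) := by
  classical
  obtain ⟨c, hc⟩ : G.HasEdwardsCutOn univ := PreconnectedOn.hasEdwardsCutOn fun x _ y _ =>
    (hconn x y).mono fun _ _ h => ⟨h, mem_univ _, mem_univ _⟩
  refine ⟨G.cutGraph c, fun _ _ h => h.1,
    (Coloring.mk (G := G.cutGraph c) c fun h => h.2).colorable, ?_⟩
  rw [degSumOn_univ, degSumOn_univ, card_univ] at hc
  simp only [← coe_edgeFinset, Set.ncard_coe_finset]
  have hc' : (2 * #G.edgeFinset + Fintype.card V : ℝ) ≤
      2 * (2 * #(G.cutGraph c).edgeFinset) + 1 := by exact_mod_cast hc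
  linarith
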